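/- arXiv:math/9908090 — 3 statements merged into one kernel-verified Lean document; each statement's English description precedes it below -/
import Mathlib

section
/- Let 1 ≤ i ≤ n−1 and let w ∈ S_n satisfy ℓ(w·s_i) < ℓ(w). Then for any finite sequence i_1,…,i_k of indices in {1,…,n−1}, setting M := A_{i_1}∘A_{i_2}∘⋯∘A_{i_k}, one has ⟨A_i(M(𝔖_w)), 𝔖_w⟩ = −q·⟨M(𝔖_w), 𝔖_w⟩, where ⟨g, 𝔖_w⟩ denotes the coefficient of the image of 𝔖_w when the image of g in P_n/I_n is expanded in the Schubert basis. -/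
open MvPolynomial

noncomputable section

/-- The ground field `F = ℚ(q)`, rational functions over `ℚ`. -/
abbrev F : Type := RatFunc ℚ

/-- The indeterminate `q`. -/
def q : F := RatFunc.X

/-- The polynomial ring `P_n = F[x_1, …, x_n]` (variables indexed `0, …, n-1`). -/
abbrev Pn (n : ℕ) : Type := MvPolynomial (Fin n) F

/-- The adjacent transposition `s_i` swapping positions `i` and `i+1` (0-indexed). -/
def transp (n i : ℕ) (h : i + 1 < n) : Equiv.Perm (Fin n) :=
  Equiv.swap ⟨i, by omega⟩ ⟨i + 1, h⟩

/-- Multiplication by the variable `x_j`. -/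
def Xop {n : ℕ} (j : Fin n) : Pn n →ₗ[F] Pn n := LinearMap.mulLeft F (X j)

/-- A family of candidate divided-difference operators. -/
abbrev DDFam (n : ℕ) := ∀ i : ℕ, i + 1 < n → (Pn n →ₗ[F] Pn n)

/-- `dd` is the family of divided difference operators:
`(x_i - x_{i+1}) · ∂_i f = f - s_i f`.  This determines `dd` uniquely. -/
def IsDD {n : ℕ} (dd : DDFam n) : Prop :=
  ∀ (i : ℕ) (h : i + 1 < n) (f : Pn n),
    (X (⟨i, by omega⟩ : Fin n) - X ⟨i + 1, h⟩) * dd i h f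
      = f - rename (⇑(transp n i h)) f

/-- The q-commutator operator `A_i = ∂_i ∘ X_i - q · X_i ∘ ∂_i`. -/
def Aop {n : ℕ} (dd : DDFam n) (i : ℕ) (h : i + 1 < n) : Pn n →ₗ[F] Pn n :=
  dd i h ∘ₗ Xop ⟨i, by omega⟩ - q • (Xop (⟨i, by omega⟩ : Fin n) ∘ₗ dd i h)

/-- The operator `B_i = -(∂_i ∘ X_{i+1} - q · X_{i+1} ∘ ∂_i)`. -/
def Bop {n : ℕ} (dd : DDFam n) (i : ℕ) (h : i + 1 < n) : Pn n →ₗ[F] Pn n :=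
  -(dd i h ∘ₗ Xop ⟨i + 1, h⟩ - q • (Xop (⟨i + 1, h⟩ : Fin n) ∘ₗ dd i h))

/-- Swap the exponents of `x_i` and `x_{i+1}` in a monomial exponent vector. -/
def swapIdx (n i : ℕ) (h : i + 1 < n) (d : Fin n →₀ ℕ) : Fin n →₀ ℕ :=
  Finsupp.equivMapDomain (transp n i h) d

/-- Value of `R_i` on the monomial with exponent vector `d`. -/
def Rval {n : ℕ} (i : ℕ) (h : i + 1 < n) (d : Fin n →₀ ℕ) : Pn n :=
  if d ⟨i + 1, h⟩ < d ⟨i, by omega⟩ then q • monomial (swapIdx n i h d) (1 : F)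
  else if d ⟨i, by omega⟩ < d ⟨i + 1, h⟩ then
    (1 - q) • monomial d (1 : F) + monomial (swapIdx n i h d) (1 : F)
  else monomial d (1 : F)

/-- The operator `R_i`, the linear extension of `Rval` from monomials. -/
def Rop {n : ℕ} (i : ℕ) (h : i + 1 < n) : Pn n →ₗ[F] Pn n :=
  (basisMonomials (Fin n) F).constr F (Rval i h)

/-- Value of `R*_i` on the monomial with exponent vector `d`. -/
def Rstarval {n : ℕ} (i : ℕ) (h : i + 1 < n) (d : Fin n →₀ ℕ) : Pn n :=
  if d ⟨i + 1, h⟩ ≤ d ⟨i, by omega⟩ then monomial (swapIdx n i h d) (1 : F)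
  else (1 - q) • monomial d (1 : F) + q • monomial (swapIdx n i h d) (1 : F)

/-- The operator `R*_i`, the linear extension of `Rstarval` from monomials. -/
def Rstarop {n : ℕ} (i : ℕ) (h : i + 1 < n) : Pn n →ₗ[F] Pn n :=
  (basisMonomials (Fin n) F).constr F (Rstarval i h)

/-- `f` is a symmetric polynomial. -/
def symmP {n : ℕ} (f : Pn n) : Prop :=
  ∀ σ : Equiv.Perm (Fin n), rename (⇑σ) f = f

/-- The ideal `I_n` generated by symmetric polynomials with zero constant term. -/
def In (n : ℕ) : Ideal (Pn n) :=
  Ideal.span {f : Pn n | symmP f ∧ constantCoeff f = 0}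

/-- The quotient map `P_n → P_n / I_n` as an `F`-linear map. -/
def mkI (n : ℕ) : Pn n →ₗ[F] (Pn n ⧸ In n) :=
  (Ideal.Quotient.mkₐ F (In n)).toLinearMap

/-- `R^k`: the image in `P_n/I_n` of the homogeneous polynomials of degree `k`. -/
def RkSub (n k : ℕ) : Submodule F (Pn n ⧸ In n) :=
  Submodule.map (mkI n) (homogeneousSubmodule (Fin n) F k)

/-- The Coxeter length of a permutation: its number of inversions. -/
def len {n : ℕ} (w : Equiv.Perm (Fin n)) : ℕ :=
  (Finset.univ.filter (fun p : Fin n × Fin n => p.1 < p.2 ∧ w p.2 < w p.1)).card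

/-- The staircase monomial `x_1^{n-1} x_2^{n-2} ⋯ x_{n-1}`. -/
def staircase (n : ℕ) : Pn n := ∏ j : Fin n, (X j : Pn n) ^ (n - 1 - (j : ℕ))

/-- `S` is the family of Schubert polynomials: `S w₀` is the staircase monomial, and
`∂_i 𝔖_w = 𝔖_{w s_i}` whenever `ℓ(w s_i) < ℓ(w)`.  This determines `S` uniquely. -/
def IsSchubert {n : ℕ} (dd : DDFam n) (S : Equiv.Perm (Fin n) → Pn n) : Prop :=
  S (Fin.revPerm) = staircase n ∧
  ∀ (w : Equiv.Perm (Fin n)) (i : ℕ) (h : i + 1 < n),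
    len (w * transp n i h) < len w → dd i h (S w) = S (w * transp n i h)

/-- The 3-cycle `(a, b, c)`, sending `a ↦ b`, `b ↦ c`, `c ↦ a`. -/
def cyc3 {n : ℕ} (a b c : Fin n) : Equiv.Perm (Fin n) :=
  Equiv.swap a c * Equiv.swap a b

/-- The Hecke algebra relations for a family of operators. -/
def HeckeRels {n : ℕ} (T : ∀ i : ℕ, i + 1 < n → (Pn n →ₗ[F] Pn n)) : Prop :=
  (∀ (i : ℕ) (h : i + 2 < n),
      T i (by omega) ∘ₗ (T (i + 1) (by omega) ∘ₗ T i (by omega))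
        = T (i + 1) (by omega) ∘ₗ (T i (by omega) ∘ₗ T (i + 1) (by omega))) ∧
  (∀ (i j : ℕ) (hi : i + 1 < n) (hj : j + 1 < n), (i + 1 < j ∨ j + 1 < i) →
      T i hi ∘ₗ T j hj = T j hj ∘ₗ T i hi) ∧
  (∀ (i : ℕ) (h : i + 1 < n),
      T i h ∘ₗ T i h = (1 - q) • T i h + q • LinearMap.id)

/-- Composition `T_{j₁} ∘ T_{j₂} ∘ ⋯ ∘ T_{j_k}` along a list of indices. -/
def compFam {n : ℕ} (T : ℕ → (Pn n →ₗ[F] Pn n)) : List ℕ → (Pn n →ₗ[F] Pn n)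
  | [] => LinearMap.id
  | j :: l => T j ∘ₗ compFam T l

/-- Totalized version of `Aop` (identity outside the allowed index range). -/
def Atot {n : ℕ} (dd : DDFam n) (j : ℕ) : Pn n →ₗ[F] Pn n :=
  if h : j + 1 < n then Aop dd j h else LinearMap.id

/-- Totalized version of `Rop` (identity outside the allowed index range). -/
def Rtot (n : ℕ) (j : ℕ) : Pn n →ₗ[F] Pn n :=
  if h : j + 1 < n then Rop j h else LinearMap.id

/-- The (0-indexed) index set `J_μ`: all `j ∈ {0, …, n-2}` such that `j+1` is not a
partial sum `μ_1 + ⋯ + μ_k` of the partition. -/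
def Jlist (n : ℕ) (μ : List ℕ) : List ℕ :=
  (List.range (n - 1)).filter
    (fun j => (List.range (μ.length + 1)).all (fun k => (μ.take k).sum != j + 1))

/-- The value `w(a)` of a permutation, as a function on naturals. -/
def permVal {n : ℕ} (w : Equiv.Perm (Fin n)) (a : ℕ) : ℕ :=
  if h : a < n then ((w ⟨a, h⟩ : Fin n) : ℕ) else a

open scoped Classical in
/-- The factor `m_q` attached to the block of positions `p, p+1, …, p+m-1`:
`(-q)^j` if, within the block, `w` has descents exactly at the first `j` places
(i.e. `w` decreases on the first `j+1` entries and then increases), and `0` otherwise. -/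
def blockWeight {n : ℕ} (w : Equiv.Perm (Fin n)) (p m : ℕ) : F :=
  if h : ∃ j, j < m ∧ ∀ a : ℕ, p ≤ a → a + 1 < p + m →
      (permVal w (a + 1) < permVal w a ↔ a < p + j)
  then (-q) ^ h.choose else 0

/-- `weight_q^μ(w) = ∏ m_q(w_i)`, the product of the block factors over the blocks of `μ`. -/
def weightq {n : ℕ} (μ : List ℕ) (w : Equiv.Perm (Fin n)) : F :=
  ∏ t ∈ Finset.range μ.length, blockWeight w ((μ.take t).sum) (μ.getD t 0)

/-- `μ` is a partition of `n`. -/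
def IsPartition (n : ℕ) (μ : List ℕ) : Prop :=
  List.Pairwise (· ≥ ·) μ ∧ (∀ x ∈ μ, 0 < x) ∧ μ.sum = n

/-- The operator `D_i f = c_i · f + P_i(x_i, x_{i+1}) · ∂_i f`. -/
def Dop {n : ℕ} (dd : DDFam n) (c : ℕ → F) (Pp : ℕ → MvPolynomial (Fin 2) F)
    (i : ℕ) (h : i + 1 < n) : Pn n →ₗ[F] Pn n :=
  c i • LinearMap.id +
    LinearMap.mulLeft F (aeval ![(X ⟨i, by omega⟩ : Pn n), X ⟨i + 1, h⟩] (Pp i)) ∘ₗ dd i h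

/-- `f` has integer coefficients. -/
def IsIntPoly {n : ℕ} (f : Pn n) : Prop :=
  ∀ d : Fin n →₀ ℕ, ∃ z : ℤ, coeff d f = (z : F)

/-! For every polynomial `g`, `(A_i + q) g = (1 + q)(g - x_i ∂_i g) + (x_i + x_{i+1}) ∂_i g` is
`s_i`-invariant, so it suffices to show that an `s_i`-invariant polynomial `p` has zero
`𝔖_w`-coefficient when `ℓ(w s_i) < ℓ(w)`. Since `∂_i` preserves `I_n` and sends `𝔖_u` to
`𝔖_{u s_i}` or to `0` (the latter exactly when `u s_i` is longer than `u`, as `∂_i² = 0`), the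
`𝔖_{w s_i}`-coefficient of `∂_i p` is the `𝔖_w`-coefficient of `p`; but `∂_i p = 0`. -/

section DividedDifference

variable {n : ℕ}

lemma transp_apply_left (i : ℕ) (h : i + 1 < n) : transp n i h ⟨i, by omega⟩ = ⟨i + 1, h⟩ :=
  Equiv.swap_apply_left _ _

lemma transp_apply_right (i : ℕ) (h : i + 1 < n) : transp n i h ⟨i + 1, h⟩ = ⟨i, by omega⟩ :=
  Equiv.swap_apply_right _ _

lemma rename_transp_rename_transp (i : ℕ) (h : i + 1 < n) (f : Pn n) :
    rename (transp n i h) (rename (transp n i h) f) = f := by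
  rw [rename_rename, ← Equiv.Perm.coe_mul, transp, Equiv.swap_mul_self, Equiv.Perm.coe_one,
    rename_id_apply]

lemma X_sub_X_succ_ne_zero (i : ℕ) (h : i + 1 < n) :
    (X ⟨i, by omega⟩ - X ⟨i + 1, h⟩ : Pn n) ≠ 0 :=
  sub_ne_zero.2 <| (X_injective (R := F)).ne <| by simp

variable {dd : DDFam n}

namespace IsDD

variable (hdd : IsDD dd) (i : ℕ) (h : i + 1 < n)
include hdd

lemma rename_transp_apply (f : Pn n) : rename (transp n i h) (dd i h f) = dd i h f := by
  apply mul_left_cancel₀ (X_sub_X_succ_ne_zero i h)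
  have hs := congrArg (rename (transp n i h)) (hdd i h f)
  rw [map_mul, map_sub, map_sub, rename_X, rename_X, transp_apply_left, transp_apply_right,
    rename_transp_rename_transp] at hs
  linear_combination -hs - hdd i h f

lemma apply_eq_zero_of_rename_eq {f : Pn n} (hf : rename (transp n i h) f = f) :
    dd i h f = 0 := by
  have hf0 := hdd i h f
  rw [hf, sub_self] at hf0
  exact (mul_eq_zero.1 hf0).resolve_left (X_sub_X_succ_ne_zero i h)

lemma apply_apply (f : Pn n) : dd i h (dd i h f) = 0 :=
  hdd.apply_eq_zero_of_rename_eq i h (hdd.rename_transp_apply i h f)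

lemma map_mul (r f : Pn n) :
    dd i h (r * f) = dd i h r * f + rename (transp n i h) r * dd i h f := by
  apply mul_left_cancel₀ (X_sub_X_succ_ne_zero i h)
  have hrf := hdd i h (r * f)
  rw [_root_.map_mul (rename (transp n i h)) r f] at hrf
  linear_combination hrf - f * hdd i h r - rename (transp n i h) r * hdd i h f

lemma apply_X : dd i h (X ⟨i, by omega⟩) = 1 := by
  apply mul_left_cancel₀ (X_sub_X_succ_ne_zero i h)
  rw [hdd i h, rename_X, transp_apply_left, mul_one]

lemma apply_mem_In {f : Pn n} (hf : f ∈ In n) : dd i h f ∈ In n := by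
  induction hf using Submodule.span_induction with
  | mem x hx => rw [hdd.apply_eq_zero_of_rename_eq i h (hx.1 _)]; exact zero_mem _
  | zero => rw [map_zero]; exact zero_mem _
  | add x y _ _ hx hy => rw [map_add]; exact add_mem hx hy
  | smul a x hx ihx =>
    rw [smul_eq_mul, hdd.map_mul]
    exact add_mem (Ideal.mul_mem_left _ _ hx) (Ideal.mul_mem_left _ _ ihx)

lemma Aop_apply (g : Pn n) :
    Aop dd i h g = g + X ⟨i + 1, h⟩ * dd i h g - C q * (X ⟨i, by omega⟩ * dd i h g) := by
  have hA : Aop dd i h g = dd i h (X ⟨i, by omega⟩ * g) - q • (X ⟨i, by omega⟩ * dd i h g) :=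
    rfl
  rw [hA, hdd.map_mul, hdd.apply_X, rename_X, transp_apply_left, one_mul, smul_eq_C_mul]

lemma rename_transp_Aop_add_smul (g : Pn n) :
    rename (transp n i h) (Aop dd i h g + q • g) = Aop dd i h g + q • g := by
  rw [hdd.Aop_apply, smul_eq_C_mul]
  simp only [_root_.map_add, _root_.map_sub, _root_.map_mul, rename_X, rename_C,
    transp_apply_left, transp_apply_right, hdd.rename_transp_apply]
  linear_combination (1 + C q : Pn n) * hdd i h g

end IsDD

end DividedDifference

section Length

variable {n : ℕ}

lemma neg_one_pow_len (u : Equiv.Perm (Fin n)) : (-1 : ℤˣ) ^ len u = Equiv.Perm.signAux u := by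
  rw [Equiv.Perm.signAux, Finset.prod_ite, Finset.prod_const, Finset.prod_const_one, mul_one,
    len]
  congr 1
  refine Finset.card_nbij' (fun p => ⟨p.2, p.1⟩) (fun x => (x.2, x.1)) ?_ ?_ ?_ ?_
  · rintro ⟨a, b⟩ hab
    simp only [Finset.mem_coe, Finset.mem_filter, Finset.mem_univ, true_and,
      Equiv.Perm.mem_finPairsLT] at hab ⊢
    exact ⟨hab.1, hab.2.le⟩
  · rintro ⟨a, b⟩ hab
    simp only [Finset.mem_coe, Finset.mem_filter, Finset.mem_univ, true_and,
      Equiv.Perm.mem_finPairsLT] at hab ⊢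
    exact ⟨hab.1, hab.2.lt_of_ne (u.injective.ne hab.1.ne')⟩
  · intro _ _; rfl
  · intro _ _; rfl

lemma len_mul_swap_ne (u : Equiv.Perm (Fin n)) {a b : Fin n} (hab : a ≠ b) :
    len (u * Equiv.swap a b) ≠ len u := by
  intro hlen
  have hsign := neg_one_pow_len (u * Equiv.swap a b)
  rw [hlen, neg_one_pow_len, Equiv.Perm.signAux_mul, Equiv.Perm.signAux_swap hab, mul_neg_one]
    at hsign
  exact units_ne_neg_self _ hsign

end Length

section SchubertCoefficients

variable {n : ℕ} {dd : DDFam n} {S : Equiv.Perm (Fin n) → Pn n}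

lemma IsSchubert.apply_eq_zero (hdd : IsDD dd) (hS : IsSchubert dd S) {i : ℕ} (h : i + 1 < n)
    {u : Equiv.Perm (Fin n)} (hu : ¬ len (u * transp n i h) < len u) : dd i h (S u) = 0 := by
  have hlt : len u < len (u * transp n i h) :=
    lt_of_le_of_ne (not_lt.1 hu) (len_mul_swap_ne u (by simp)).symm
  have hus : u * transp n i h * transp n i h = u := by
    rw [mul_assoc, transp, Equiv.swap_mul_self, mul_one]
  have hdescent := hS.2 (u * transp n i h) i h (by rwa [hus])
  rw [hus] at hdescent
  rw [← hdescent, hdd.apply_apply]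

variable {B : Module.Basis (Equiv.Perm (Fin n)) F (Pn n ⧸ In n)}

lemma mkI_linearCombination_repr (hB : ∀ v, B v = mkI n (S v)) (f : Pn n) :
    mkI n (Finsupp.linearCombination F S (B.repr (mkI n f))) = mkI n f := by
  rw [Finsupp.apply_linearCombination, show ⇑(mkI n) ∘ S = ⇑B from funext fun v => (hB v).symm,
    B.linearCombination_repr]

lemma linearMap_ext_of_In_schubert (hB : ∀ v, B v = mkI n (S v)) {M : Type*}
    [AddCommGroup M] [Module F M] {φ ψ : Pn n →ₗ[F] M} (hφ : ∀ f ∈ In n, φ f = 0)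
    (hψ : ∀ f ∈ In n, ψ f = 0) (h : ∀ u, φ (S u) = ψ (S u)) : φ = ψ := by
  refine LinearMap.ext fun f => ?_
  set f' := Finsupp.linearCombination F S (B.repr (mkI n f))
  have hf' : f - f' ∈ In n := Ideal.Quotient.eq.1 (mkI_linearCombination_repr hB f).symm
  calc φ f = φ f' := by rw [← sub_eq_zero, ← map_sub]; exact hφ _ hf'
    _ = ψ f' := by
      rw [Finsupp.apply_linearCombination, Finsupp.apply_linearCombination,
        show ⇑φ ∘ S = ⇑ψ ∘ S from funext h]
    _ = ψ f := by rw [eq_comm, ← sub_eq_zero, ← map_sub]; exact hψ _ hf'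

lemma repr_mkI_apply (hdd : IsDD dd) (hS : IsSchubert dd S) (hB : ∀ v, B v = mkI n (S v))
    {i : ℕ} (h : i + 1 < n) {w : Equiv.Perm (Fin n)} (hw : len (w * transp n i h) < len w)
    (f : Pn n) : B.repr (mkI n (dd i h f)) (w * transp n i h) = B.repr (mkI n f) w := by
  let coeff (v : Equiv.Perm (Fin n)) : Pn n →ₗ[F] F :=
    Finsupp.lapply v ∘ₗ B.repr.toLinearMap ∘ₗ mkI n
  have hcoeff : ∀ v, ∀ g ∈ In n, coeff v g = 0 := fun v g hg => by
    have hg0 : mkI n g = 0 := Ideal.Quotient.eq_zero_iff_mem.2 hg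
    simp [coeff, hg0]
  refine LinearMap.congr_fun (linearMap_ext_of_In_schubert hB
    (φ := coeff (w * transp n i h) ∘ₗ dd i h) (ψ := coeff w)
    (fun g hg => hcoeff _ _ (hdd.apply_mem_In i h hg)) (hcoeff w) fun u => ?_) f
  by_cases hu : len (u * transp n i h) < len u
  · simp [coeff, hS.2 u i h hu, ← hB, Finsupp.single_apply]
  · have huw : u ≠ w := by rintro rfl; exact hu hw
    simp [coeff, hS.apply_eq_zero hdd h hu, ← hB, huw]

lemma repr_mkI_eq_zero_of_rename_transp_eq (hdd : IsDD dd) (hS : IsSchubert dd S)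
    (hB : ∀ v, B v = mkI n (S v)) {i : ℕ} (h : i + 1 < n) {w : Equiv.Perm (Fin n)}
    (hw : len (w * transp n i h) < len w) {p : Pn n} (hp : rename (transp n i h) p = p) :
    B.repr (mkI n p) w = 0 := by
  rw [← repr_mkI_apply hdd hS hB h hw, hdd.apply_eq_zero_of_rename_eq i h hp, map_zero, map_zero,
    Finsupp.zero_apply]

lemma repr_mkI_Aop (hdd : IsDD dd) (hS : IsSchubert dd S) (hB : ∀ v, B v = mkI n (S v))
    {i : ℕ} (h : i + 1 < n) {w : Equiv.Perm (Fin n)} (hw : len (w * transp n i h) < len w)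
    (g : Pn n) : B.repr (mkI n (Aop dd i h g)) w = -q * B.repr (mkI n g) w := by
  have hinv := repr_mkI_eq_zero_of_rename_transp_eq hdd hS hB h hw
    (hdd.rename_transp_Aop_add_smul i h g)
  rw [map_add, map_smul, map_add, map_smul, Finsupp.add_apply, Finsupp.smul_apply,
    smul_eq_mul] at hinv
  linear_combination hinv

end SchubertCoefficients

theorem stmt5_general (n : ℕ) (dd : DDFam n) (hdd : IsDD dd)
    (S : Equiv.Perm (Fin n) → Pn n) (hS : IsSchubert dd S)
    (B : Module.Basis (Equiv.Perm (Fin n)) F (Pn n ⧸ In n)) (hB : ∀ v, B v = mkI n (S v))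
    (i : ℕ) (h : i + 1 < n) (w : Equiv.Perm (Fin n))
    (hw : len (w * transp n i h) < len w)
    (l : List ℕ) :
    B.repr (mkI n (Aop dd i h (compFam (Atot dd) l (S w)))) w
      = -q * B.repr (mkI n (compFam (Atot dd) l (S w))) w :=
  repr_mkI_Aop hdd hS hB h hw _

/-- Lemma 4.2, `⟨A_i M 𝔖_w, 𝔖_w⟩ = -q ⟨M 𝔖_w, 𝔖_w⟩` when `ℓ(w s_i) < ℓ(w)`. -/
theorem stmt5 (n : ℕ) (hn : 2 ≤ n) (dd : DDFam n) (hdd : IsDD dd)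
    (S : Equiv.Perm (Fin n) → Pn n) (hS : IsSchubert dd S)
    (B : Module.Basis (Equiv.Perm (Fin n)) F (Pn n ⧸ In n)) (hB : ∀ v, B v = mkI n (S v))
    (i : ℕ) (h : i + 1 < n) (w : Equiv.Perm (Fin n))
    (hw : len (w * transp n i h) < len w)
    (l : List ℕ) (hl : ∀ j ∈ l, j + 1 < n) :
    B.repr (mkI n (Aop dd i h (compFam (Atot dd) l (S w)))) w
      = -q * B.repr (mkI n (compFam (Atot dd) l (S w))) w :=
  stmt5_general n dd hdd S hS B hB i h w hw l

end
end

section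
/- The operators R*_1,…,R*_{n−1} satisfy the Hecke algebra relations: R*_i∘R*_{i+1}∘R*_i = R*_{i+1}∘R*_i∘R*_{i+1} for all 1 ≤ i ≤ n−2; R*_i∘R*_j = R*_j∘R*_i whenever |i−j| > 1; and R*_i∘R*_i = (1−q)·R*_i + q·id for all 1 ≤ i ≤ n−1. -/
open MvPolynomial

noncomputable section

/-! On a monomial, `R*_i` only looks at the exponents `a, b` in positions `i, i + 1`: it is
`heckeMove q a b x y`, where `x` is the monomial and `y` is `x` with `a` and `b` exchanged. So each relation can
be checked on a family `M` of monomials indexed by the exponents placed in the two, three or four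
positions involved, and becomes an identity about abstract operators acting on such a family,
proved by splitting on the relative order of the exponents. Indexing by exponent values rather
than by permutations makes equal exponents give literally the same monomial, which is what the
quadratic and braid relations need in the degenerate cases. -/

section HeckeMove

variable {K V : Type*} [CommRing K] [AddCommGroup V] [Module K V] (t : K)

def heckeMove (a b : ℕ) (x y : V) : V :=
  if b ≤ a then y else (1 - t) • x + t • y

variable {t}

theorem heckeMove_of_le {a b : ℕ} (h : b ≤ a) (x y : V) : heckeMove t a b x y = y :=
  if_pos h

theorem heckeMove_of_lt {a b : ℕ} (h : a < b) (x y : V) :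
    heckeMove t a b x y = (1 - t) • x + t • y :=
  if_neg (not_le.2 h)

theorem heckeMove_quadratic (T : V →ₗ[K] V) (M : ℕ → ℕ → V)
    (hT : ∀ u v, T (M u v) = heckeMove t u v (M u v) (M v u)) (a b : ℕ) :
    T (T (M a b)) = (1 - t) • T (M a b) + t • M a b := by
  rcases lt_trichotomy a b with hab | rfl | hab
  · simp (disch := omega) only [hT, heckeMove_of_lt, heckeMove_of_le, map_add, map_smul]
  · simp only [hT, heckeMove_of_le le_rfl]
    module
  · simp (disch := omega) only [hT, heckeMove_of_lt, heckeMove_of_le]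

theorem heckeMove_comm (T₁ T₂ : V →ₗ[K] V) (M : ℕ → ℕ → ℕ → ℕ → V)
    (h₁ : ∀ u v w z, T₁ (M u v w z) = heckeMove t u v (M u v w z) (M v u w z))
    (h₂ : ∀ u v w z, T₂ (M u v w z) = heckeMove t w z (M u v w z) (M u v z w))
    (a b c e : ℕ) : T₁ (T₂ (M a b c e)) = T₂ (T₁ (M a b c e)) := by
  rcases le_or_gt b a with hab | hab <;> rcases le_or_gt e c with hce | hce
  all_goals
    simp (disch := omega) only [h₁, h₂, heckeMove_of_lt, heckeMove_of_le, map_add, map_smul]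
  all_goals module

theorem heckeMove_braid (T₁ T₂ : V →ₗ[K] V) (M : ℕ → ℕ → ℕ → V)
    (h₁ : ∀ u v w, T₁ (M u v w) = heckeMove t u v (M u v w) (M v u w))
    (h₂ : ∀ u v w, T₂ (M u v w) = heckeMove t v w (M u v w) (M u w v))
    (a b c : ℕ) : T₁ (T₂ (T₁ (M a b c))) = T₂ (T₁ (T₂ (M a b c))) := by
  rcases lt_trichotomy a b with hab | hab | hab <;>
  rcases lt_trichotomy b c with hbc | hbc | hbc <;>
  rcases lt_trichotomy a c with hac | hac | hac <;>
  first
  | omega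
  | subst_vars
    simp (disch := omega) only [h₁, h₂, heckeMove_of_lt, heckeMove_of_le, map_add, map_smul]
    all_goals module

end HeckeMove

section SwapIdx

variable {n i : ℕ} (h : i + 1 < n)

theorem swapIdx_update_update (f : Fin n →₀ ℕ) (u v : ℕ) :
    swapIdx n i h ((f.update ⟨i, by omega⟩ u).update ⟨i + 1, h⟩ v)
      = (f.update ⟨i, by omega⟩ v).update ⟨i + 1, h⟩ u := by
  ext k
  simp only [swapIdx, transp, Finsupp.equivMapDomain_apply, Equiv.symm_swap,
    Equiv.swap_apply_def, Finsupp.update_apply, ite_eq_left_iff]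
  split_ifs <;> simp_all [Fin.ext_iff]

theorem swapIdx_update_of_ne (f : Fin n →₀ ℕ) {c : Fin n} (hc : (c : ℕ) ≠ i)
    (hc' : (c : ℕ) ≠ i + 1) (w : ℕ) :
    swapIdx n i h (f.update c w) = (swapIdx n i h f).update c w := by
  ext k
  simp only [swapIdx, transp, Finsupp.equivMapDomain_apply, Equiv.symm_swap,
    Equiv.swap_apply_def, Finsupp.update_apply]
  split_ifs <;> simp_all [Fin.ext_iff]

end SwapIdx

namespace Rstarop

variable {n i : ℕ} (h : i + 1 < n)

theorem apply_monomial (d : Fin n →₀ ℕ) :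
    Rstarop i h (monomial d (1 : F)) =
      heckeMove q (d ⟨i, by omega⟩) (d ⟨i + 1, h⟩) (monomial d 1)
        (monomial (swapIdx n i h d) 1) :=
  (basisMonomials (Fin n) F).constr_basis F (Rstarval i h) d

theorem apply_monomial_update_update (f : Fin n →₀ ℕ) (u v : ℕ) :
    Rstarop i h (monomial ((f.update ⟨i, by omega⟩ u).update ⟨i + 1, h⟩ v) (1 : F)) =
      heckeMove q u v (monomial ((f.update ⟨i, by omega⟩ u).update ⟨i + 1, h⟩ v) 1)
        (monomial ((f.update ⟨i, by omega⟩ v).update ⟨i + 1, h⟩ u) 1) := by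
  rw [apply_monomial, swapIdx_update_update]
  simp [Finsupp.update_apply]

theorem comp_self :
    Rstarop i h ∘ₗ Rstarop i h = (1 - q) • Rstarop i h + q • LinearMap.id := by
  refine (basisMonomials (Fin n) F).ext fun d => ?_
  simpa using heckeMove_quadratic (Rstarop i h)
    (fun u v => monomial ((d.update ⟨i, by omega⟩ u).update ⟨i + 1, h⟩ v) 1)
    (apply_monomial_update_update h d) (d ⟨i, by omega⟩) (d ⟨i + 1, h⟩)

theorem comp_comm {j : ℕ} (hj : j + 1 < n) (hij : i + 1 < j ∨ j + 1 < i) :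
    Rstarop i h ∘ₗ Rstarop j hj = Rstarop j hj ∘ₗ Rstarop i h := by
  refine (basisMonomials (Fin n) F).ext fun d => ?_
  let M u v w z : Pn n := monomial ((((d.update ⟨i, by omega⟩ u).update ⟨i + 1, h⟩ v).update
    ⟨j, by omega⟩ w).update ⟨j + 1, hj⟩ z) 1
  have h₁ : ∀ u v w z, Rstarop i h (M u v w z) = heckeMove q u v (M u v w z) (M v u w z) := by
    intro u v w z
    rw [apply_monomial, swapIdx_update_of_ne _ _ (by simp; omega) (by simp; omega),
      swapIdx_update_of_ne _ _ (by simp; omega) (by simp; omega), swapIdx_update_update]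
    simp [M, Finsupp.update_apply, show i ≠ j by omega, show i ≠ j + 1 by omega,
      show i + 1 ≠ j by omega]
  have h₂ : ∀ u v w z, Rstarop j hj (M u v w z) = heckeMove q w z (M u v w z) (M u v z w) :=
    fun u v w z => apply_monomial_update_update hj _ w z
  simpa [M] using heckeMove_comm _ _ M h₁ h₂
    (d ⟨i, by omega⟩) (d ⟨i + 1, h⟩) (d ⟨j, by omega⟩) (d ⟨j + 1, hj⟩)

theorem braid (h' : i + 1 + 1 < n) :
    Rstarop i h ∘ₗ Rstarop (i + 1) h' ∘ₗ Rstarop i h =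
      Rstarop (i + 1) h' ∘ₗ Rstarop i h ∘ₗ Rstarop (i + 1) h' := by
  refine (basisMonomials (Fin n) F).ext fun d => ?_
  let M u v w : Pn n := monomial (((d.update ⟨i, by omega⟩ u).update ⟨i + 1, h⟩ v).update
    ⟨i + 1 + 1, h'⟩ w) 1
  have h₁ : ∀ u v w, Rstarop i h (M u v w) = heckeMove q u v (M u v w) (M v u w) := by
    intro u v w
    rw [apply_monomial, swapIdx_update_of_ne _ _ (by simp; omega) (by simp),
      swapIdx_update_update]
    simp [M, Finsupp.update_apply, show i ≠ i + 1 + 1 by omega]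
  have h₂ : ∀ u v w, Rstarop (i + 1) h' (M u v w) = heckeMove q v w (M u v w) (M u w v) :=
    fun u v w => apply_monomial_update_update h' _ v w
  simpa [M] using heckeMove_braid _ _ M h₁ h₂
    (d ⟨i, by omega⟩) (d ⟨i + 1, h⟩) (d ⟨i + 1 + 1, h'⟩)

end Rstarop

theorem stmt6_general (n : ℕ) :
    HeckeRels (fun i h => (Rstarop i h : Pn n →ₗ[F] Pn n)) :=
  ⟨fun _ h => Rstarop.braid (by omega) h, fun _ _ hi hj hij => Rstarop.comp_comm hi hj hij,
    fun _ h => Rstarop.comp_self h⟩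

/-- the operators `R*_i` satisfy the Hecke algebra relations. -/
theorem stmt6 (n : ℕ) (hn : 2 ≤ n) :
    HeckeRels (fun i h => (Rstarop i h : Pn n →ₗ[F] Pn n)) :=
  stmt6_general n

end
end

section
/- The operators R_1,…,R_{n−1} satisfy the Hecke algebra relations: R_i∘R_{i+1}∘R_i = R_{i+1}∘R_i∘R_{i+1} for all 1 ≤ i ≤ n−2; R_i∘R_j = R_j∘R_i whenever |i−j| > 1; and R_i∘R_i = (1−q)·R_i + q·id for all 1 ≤ i ≤ n−1. -/
open MvPolynomial

noncomputable section

/-! Evaluated on a monomial, each Hecke relation only involves the exponents at (at most) three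
positions and the monomials obtained by permuting them. It is therefore an identity for the rule
`heckeStep` on an abstract family of vectors permuted by involutions, checked by comparing those
exponents. At a tie `a = b` the rule does not mention the exchanged monomial, so coincidences
among the monomials never have to be tracked. -/

section HeckeStep

variable {R V E : Type*} [CommRing R] [AddCommGroup V] [Module R V]

/-- `R_i` sends a monomial `x` with exponents `a, b` at `i, i+1` to `heckeStep q a b x y`,
where `y` is `x` with these two exponents exchanged. -/
def heckeStep (q : R) (a b : ℕ) (x y : V) : V :=
  if b < a then q • y else if a < b then (1 - q) • x + y else x

theorem map_heckeStep (q : R) (T : V →ₗ[R] V) (a b : ℕ) (x y : V) :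
    T (heckeStep q a b x y) = heckeStep q a b (T x) (T y) := by
  unfold heckeStep
  split_ifs <;> simp

def IsHeckeStepAlong (q : R) (T : V →ₗ[R] V) (m : E → V) (s : E → E) (a b : E → ℕ) : Prop :=
  ∀ e, T (m e) = heckeStep q (a e) (b e) (m e) (m (s e))

variable {q : R} {T T' : V →ₗ[R] V} {m : E → V} {s t : E → E} {a b c d : E → ℕ}

theorem IsHeckeStepAlong.comp_self_apply (hT : IsHeckeStepAlong q T m s a b)
    (hs : s.Involutive) (has : ∀ e, a (s e) = b e) (hbs : ∀ e, b (s e) = a e) (e : E) :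
    T (T (m e)) = (1 - q) • T (m e) + q • m e := by
  rw [hT e, map_heckeStep, hT, hT, has, hbs, hs]
  unfold heckeStep
  split_ifs <;> first | omega | module

theorem IsHeckeStepAlong.comm_apply (hT : IsHeckeStepAlong q T m s a b)
    (hT' : IsHeckeStepAlong q T' m t c d) (hst : ∀ e, s (t e) = t (s e))
    (hat : ∀ e, a (t e) = a e) (hbt : ∀ e, b (t e) = b e)
    (hcs : ∀ e, c (s e) = c e) (hds : ∀ e, d (s e) = d e) (e : E) :
    T (T' (m e)) = T' (T (m e)) := by
  simp only [hT _, hT' _, map_heckeStep, hat, hbt, hcs, hds, hst]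
  unfold heckeStep
  split_ifs <;> first | omega | module

theorem IsHeckeStepAlong.braid_apply (hT : IsHeckeStepAlong q T m s a b)
    (hT' : IsHeckeStepAlong q T' m t b c) (hs : s.Involutive) (ht : t.Involutive)
    (hsts : ∀ e, s (t (s e)) = t (s (t e)))
    (has : ∀ e, a (s e) = b e) (hbs : ∀ e, b (s e) = a e) (hcs : ∀ e, c (s e) = c e)
    (hat : ∀ e, a (t e) = a e) (hbt : ∀ e, b (t e) = c e) (hct : ∀ e, c (t e) = b e)
    (e : E) :
    T (T' (T (m e))) = T' (T (T' (m e))) := by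
  simp only [hT _, hT' _, map_heckeStep, has, hbs, hcs, hat, hbt, hct, hs _, ht _, hsts]
  unfold heckeStep
  split_ifs <;> first | omega | module

end HeckeStep

section Monomials

variable {n i j : ℕ}

theorem transp_val (h : i + 1 < n) (x : Fin n) :
    (transp n i h x : ℕ) = if (x : ℕ) = i then i + 1 else if (x : ℕ) = i + 1 then i else x := by
  simp only [transp, Equiv.swap_apply_def]
  split_ifs <;> simp_all [Fin.ext_iff]

theorem transp_involutive (h : i + 1 < n) : Function.Involutive (transp n i h) :=
  Equiv.swap_apply_self _ _

theorem transp_comm (hi : i + 1 < n) (hj : j + 1 < n) (hij : i + 1 < j ∨ j + 1 < i)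
    (x : Fin n) : transp n i hi (transp n j hj x) = transp n j hj (transp n i hi x) := by
  apply Fin.ext
  simp only [transp_val]
  split_ifs <;> omega

theorem transp_braid (h : i + 2 < n) (x : Fin n) :
    transp n i (by omega) (transp n (i + 1) h (transp n i (by omega) x)) =
      transp n (i + 1) h (transp n i (by omega) (transp n (i + 1) h x)) := by
  apply Fin.ext
  simp only [transp_val]
  split_ifs <;> omega

theorem swapIdx_apply (h : i + 1 < n) (d : Fin n →₀ ℕ) (x : Fin n) :
    swapIdx n i h d x = d (transp n i h x) := by
  simp [swapIdx, transp]

theorem swapIdx_apply_left (h : i + 1 < n) (d : Fin n →₀ ℕ) :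
    swapIdx n i h d ⟨i, by omega⟩ = d ⟨i + 1, h⟩ := by
  simp [swapIdx_apply, transp]

theorem swapIdx_apply_right (h : i + 1 < n) (d : Fin n →₀ ℕ) :
    swapIdx n i h d ⟨i + 1, h⟩ = d ⟨i, by omega⟩ := by
  simp [swapIdx_apply, transp]

theorem swapIdx_apply_of_ne (h : i + 1 < n) (d : Fin n →₀ ℕ) {x : ℕ} (hx : x < n)
    (hxi : x ≠ i) (hxi' : x ≠ i + 1) : swapIdx n i h d ⟨x, hx⟩ = d ⟨x, hx⟩ := by
  rw [swapIdx_apply, transp, Equiv.swap_apply_of_ne_of_ne] <;> simp [hxi, hxi']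

theorem swapIdx_involutive (h : i + 1 < n) : (swapIdx n i h).Involutive := fun d => by
  ext x
  simp only [swapIdx_apply, transp_involutive h x]

theorem swapIdx_comm (hi : i + 1 < n) (hj : j + 1 < n) (hij : i + 1 < j ∨ j + 1 < i)
    (d : Fin n →₀ ℕ) : swapIdx n i hi (swapIdx n j hj d) = swapIdx n j hj (swapIdx n i hi d) := by
  ext x
  simp only [swapIdx_apply, transp_comm hj hi hij.symm]

theorem swapIdx_braid (h : i + 2 < n) (d : Fin n →₀ ℕ) :
    swapIdx n i (by omega) (swapIdx n (i + 1) h (swapIdx n i (by omega) d)) =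
      swapIdx n (i + 1) h (swapIdx n i (by omega) (swapIdx n (i + 1) h d)) := by
  ext x
  simp only [swapIdx_apply, transp_braid h x]

theorem isHeckeStepAlong_Rop (h : i + 1 < n) :
    IsHeckeStepAlong q (Rop i h) (fun d => monomial d (1 : F)) (swapIdx n i h)
      (· ⟨i, by omega⟩) (· ⟨i + 1, h⟩) := fun d => by
  rw [← coe_basisMonomials]
  exact (basisMonomials (Fin n) F).constr_basis F (Rval i h) d

theorem Rop_comp_self (h : i + 1 < n) :
    Rop i h ∘ₗ Rop i h = (1 - q) • Rop i h + q • LinearMap.id := by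
  ext d : 2
  exact (isHeckeStepAlong_Rop h).comp_self_apply (swapIdx_involutive h)
    (swapIdx_apply_left h) (swapIdx_apply_right h) d

theorem Rop_comm (hi : i + 1 < n) (hj : j + 1 < n) (hij : i + 1 < j ∨ j + 1 < i) :
    Rop i hi ∘ₗ Rop j hj = Rop j hj ∘ₗ Rop i hi := by
  ext d : 2
  exact (isHeckeStepAlong_Rop hi).comm_apply (isHeckeStepAlong_Rop hj) (swapIdx_comm hi hj hij)
    (fun e => swapIdx_apply_of_ne hj e _ (by omega) (by omega))
    (fun e => swapIdx_apply_of_ne hj e _ (by omega) (by omega))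
    (fun e => swapIdx_apply_of_ne hi e _ (by omega) (by omega))
    (fun e => swapIdx_apply_of_ne hi e _ (by omega) (by omega)) d

theorem Rop_braid (h : i + 2 < n) :
    Rop i (by omega) ∘ₗ (Rop (i + 1) h ∘ₗ Rop i (by omega))
      = Rop (i + 1) h ∘ₗ (Rop i (by omega) ∘ₗ Rop (i + 1) h) := by
  ext d : 2
  have hT := isHeckeStepAlong_Rop (i := i) (n := n) (by omega)
  have hT' := isHeckeStepAlong_Rop (i := i + 1) (n := n) h
  exact hT.braid_apply hT'
    (swapIdx_involutive _) (swapIdx_involutive h) (swapIdx_braid h)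
    (swapIdx_apply_left _) (swapIdx_apply_right _)
    (fun e => swapIdx_apply_of_ne _ e _ (by omega) (by omega))
    (fun e => swapIdx_apply_of_ne h e _ (by omega) (by omega))
    (swapIdx_apply_left h) (swapIdx_apply_right h) d

end Monomials

theorem stmt7_general (n : ℕ) :
    HeckeRels (fun i h => (Rop i h : Pn n →ₗ[F] Pn n)) :=
  ⟨fun _ h => Rop_braid h, fun _ _ hi hj hij => Rop_comm hi hj hij, fun _ h => Rop_comp_self h⟩

/-- the operators `R_i` satisfy the Hecke algebra relations. -/
theorem stmt7 (n : ℕ) (hn : 2 ≤ n) :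
    HeckeRels (fun i h => (Rop i h : Pn n →ₗ[F] Pn n)) :=
  stmt7_general n

end
end
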